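/- arXiv:1401.3708 — 6 statements merged into one kernel-verified Lean document; each statement's English description precedes it below -/
import Mathlib

section
/- Let n ≥ 1 and let x = (x₁,…,x_n) ∈ ℝⁿ be totally irrational, i.e., the (n+1)-tuple (x₁,…,x_n,1) is rationally independent (equivalently rank(G_x) = n+1). Then orb(x) = {y ∈ ℝⁿ : G_y = G_x}. -/
/-- `y` is in the `GL(n,ℤ) ⋉ ℤⁿ`-orbit of `x`, i.e. `y = U x + t` for an integer
matrix `U` with `det U = ±1` and an integer vector `t`. -/
def SameOrbit (n : ℕ) (x y : Fin n → ℝ) : Prop :=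
  ∃ (U : Matrix (Fin n) (Fin n) ℤ) (t : Fin n → ℤ),
    (U.det = 1 ∨ U.det = -1) ∧
    ∀ i, y i = (∑ j, (U i j : ℝ) * x j) + (t i : ℝ)

/-- The subgroup `G_x = ℤ + ℤx₁ + ⋯ + ℤxₙ` of the additive reals. -/
def Gx {n : ℕ} (x : Fin n → ℝ) : AddSubgroup ℝ :=
  AddSubgroup.closure (insert (1 : ℝ) (Set.range x))

/-- A point of `ℝⁿ` is rational if all its coordinates are rational. -/
def IsRationalPoint {n : ℕ} (y : Fin n → ℝ) : Prop :=
  ∀ i, ∃ q : ℚ, y i = (q : ℝ)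

/-- The denominator of a rational point: the least positive integer `d`
with `d • y ∈ ℤⁿ`. -/
noncomputable def den {n : ℕ} (y : Fin n → ℝ) : ℕ :=
  sInf {d : ℕ | 0 < d ∧ ∀ i, ∃ m : ℤ, (d : ℝ) * y i = (m : ℝ)}

/-- The homogeneous correspondent `ỹ = den(y)·(y,1)`, viewed as a real vector. -/
noncomputable def tildeR {n : ℕ} (y : Fin n → ℝ) : Fin (n + 1) → ℝ :=
  fun i => (den y : ℝ) * (Fin.snoc y (1 : ℝ) : Fin (n + 1) → ℝ) i

/-- A rational `m`-simplex `conv(v₀,…,v_m) ⊆ ℝⁿ` is regular if the homogeneous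
correspondents `ṽ₀,…,ṽ_m ∈ ℤ^{n+1}` can be extended to a ℤ-basis of `ℤ^{n+1}`. -/
def IsRegularSimplex {n m : ℕ} (v : Fin (m + 1) → (Fin n → ℝ)) : Prop :=
  AffineIndependent ℝ v ∧ (∀ k, IsRationalPoint (v k)) ∧
  ∃ (b : Module.Basis (Fin (n + 1)) ℤ (Fin (n + 1) → ℤ)) (f : Fin (m + 1) ↪ Fin (n + 1)),
    ∀ k i, ((b (f k)) i : ℝ) = tildeR (v k) i

/-- A rational hyperplane in `ℝⁿ`. -/
def IsRatHyperplane {n : ℕ} (H : Set (Fin n → ℝ)) : Prop :=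
  ∃ (h : Fin n → ℚ) (k : ℚ), h ≠ 0 ∧ H = {z | (∑ i, (h i : ℝ) * z i) = (k : ℝ)}

/-- A rational affine space: an intersection of rational hyperplanes. -/
def IsRatAffineSpace {n : ℕ} (F : Set (Fin n → ℝ)) : Prop :=
  ∃ S : Set (Set (Fin n → ℝ)), (∀ H ∈ S, IsRatHyperplane H) ∧ F = ⋂₀ S

/-- `F_x`: the intersection of all rational hyperplanes containing `x`
(`= ℝⁿ` if there is no such hyperplane). -/
def Fx {n : ℕ} (x : Fin n → ℝ) : Set (Fin n → ℝ) :=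
  ⋂₀ {H | IsRatHyperplane H ∧ x ∈ H}

/-- The (affine) dimension of a subset of `ℝⁿ`. -/
noncomputable def affDim {n : ℕ} (F : Set (Fin n → ℝ)) : ℕ :=
  Module.finrank ℝ ↥(vectorSpan ℝ F)

/-- `d_F`: the least denominator of a rational point of `F`. -/
noncomputable def dF {n : ℕ} (F : Set (Fin n → ℝ)) : ℕ :=
  sInf {d : ℕ | ∃ y ∈ F, IsRationalPoint y ∧ den y = d}

/-- `c_F`: the smallest possible denominator of a vertex of a regular `n`-simplex
`conv(v₀,…,v_n) ⊆ ℝⁿ` with `v₀,…,v_e ∈ F`. -/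
noncomputable def cF {n : ℕ} (e : ℕ) (F : Set (Fin n → ℝ)) : ℕ :=
  sInf {c : ℕ | ∃ (v : Fin (n + 1) → (Fin n → ℝ)) (i : Fin (n + 1)),
    IsRegularSimplex v ∧ (∀ k : Fin (n + 1), (k : ℕ) ≤ e → v k ∈ F) ∧ den (v i) = c}

/-- `c_x = c_{F_x}`. -/
noncomputable def cx {n : ℕ} (x : Fin n → ℝ) : ℕ := cF (affDim (Fx x)) (Fx x)

/-- Membership in the Farey sequence `𝔉_d`. -/
def InFarey (d : ℕ) (x : ℚ) : Prop := 0 ≤ x ∧ x ≤ 1 ∧ x.den ≤ d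

/-- `x` and `y` are neighbors (contiguous elements) of the Farey sequence `𝔉_d`. -/
def FareyNeighbor (d : ℕ) (x y : ℚ) : Prop :=
  InFarey d x ∧ InFarey d y ∧ x ≠ y ∧
  ∀ t : ℚ, InFarey d t → ¬ (min x y < t ∧ t < max x y)

/-- `y` is the companion of `x`: `comp 0 = 1`, `comp 1 = 0`, `comp (1/2) = 1`, and
for denominator `d ≥ 3`, `comp x` is the neighbor of `x` in `𝔉_d` with smaller
denominator than the other neighbor. -/
def IsCompanion (x y : ℚ) : Prop :=
  (x = 0 ∧ y = 1) ∨ (x = 1 ∧ y = 0) ∨ (x = 1/2 ∧ y = 1) ∨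
  (3 ≤ x.den ∧ FareyNeighbor x.den x y ∧
    ∀ z : ℚ, FareyNeighbor x.den x z → z ≠ y → y.den < z.den)

/-!
`G_y = ℤ + ℤy₁ + ⋯ + ℤyₙ` is the ℤ-span of the homogeneous vector `(y, 1) ∈ ℝⁿ⁺¹`, and `y = Ux + t`
exactly when `(y, 1) = A (x, 1)` for the unimodular integer matrix `A = [[U, t], [0, 1]]`. A
unimodular matrix preserves ℤ-spans, which gives `orb(x) ⊆ {y : G_y = G_x}`. Conversely, if
`G_y = G_x` then `(y, 1) = A (x, 1)` and `(x, 1) = B (y, 1)` for integer matrices `A`, `B`; total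
irrationality makes the coordinates of `(x, 1)` a ℤ-basis of `G_x`, so `BA = 1`, and it also forces
the last row of `A` to be `(0, …, 0, 1)`, i.e. `A` has the affine shape above.
-/

open Matrix Submodule

section MatrixAction

variable {ι R S : Type*} [Fintype ι] [CommRing R] [Ring S] [Algebra R S]

theorem Matrix.map_algebraMap_mulVec_apply (A : Matrix ι ι R) (v : ι → S) (i : ι) :
    (A.map (algebraMap R S) *ᵥ v) i = Fintype.linearCombination R v (A i) := by
  simp [mulVec, dotProduct, Fintype.linearCombination_apply, Algebra.smul_def]

theorem exists_map_algebraMap_mulVec_eq_iff_span_le {v w : ι → S} :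
    (∃ A : Matrix ι ι R, A.map (algebraMap R S) *ᵥ v = w) ↔
      span R (Set.range w) ≤ span R (Set.range v) := by
  rw [← Fintype.range_linearCombination R v, span_le]
  simp only [Set.range_subset_iff, SetLike.mem_coe, LinearMap.mem_range]
  constructor
  · rintro ⟨A, rfl⟩ i
    exact ⟨A i, (A.map_algebraMap_mulVec_apply v i).symm⟩
  · intro h
    choose A hA using h
    exact ⟨Matrix.of A, funext fun i => by rw [map_algebraMap_mulVec_apply, ← hA i]; rfl⟩

theorem LinearIndependent.map_algebraMap_mulVec_injective {v : ι → S}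
    (hv : LinearIndependent R v) :
    Function.Injective fun A : Matrix ι ι R => A.map (algebraMap R S) *ᵥ v := by
  intro A B hAB
  ext i j
  have hrow := congrFun hAB i
  simp only [map_algebraMap_mulVec_apply] at hrow
  exact congrFun (hv.fintypeLinearCombination_injective hrow) j

variable [DecidableEq ι]

theorem span_range_map_algebraMap_mulVec {A : Matrix ι ι R} (hA : IsUnit A.det) (v : ι → S) :
    span R (Set.range (A.map (algebraMap R S) *ᵥ v)) = span R (Set.range v) := by
  refine le_antisymm (exists_map_algebraMap_mulVec_eq_iff_span_le.mp ⟨A, rfl⟩)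
    (exists_map_algebraMap_mulVec_eq_iff_span_le.mp ⟨A⁻¹, ?_⟩)
  rw [mulVec_mulVec, ← Matrix.map_mul, nonsing_inv_mul A hA, Matrix.map_one _ (map_zero _)
    (map_one _), one_mulVec]

theorem LinearIndependent.exists_isUnit_det_of_span_eq {v w : ι → S}
    (hv : LinearIndependent R v) (h : span R (Set.range w) = span R (Set.range v)) :
    ∃ A : Matrix ι ι R, IsUnit A.det ∧ A.map (algebraMap R S) *ᵥ v = w := by
  obtain ⟨A, hA⟩ := exists_map_algebraMap_mulVec_eq_iff_span_le.mpr h.le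
  obtain ⟨B, hB⟩ := exists_map_algebraMap_mulVec_eq_iff_span_le.mpr h.ge
  have hBA : B * A = 1 := hv.map_algebraMap_mulVec_injective <| by
    simp only [Matrix.map_mul, ← mulVec_mulVec, hA, hB,
      Matrix.map_one _ (map_zero _) (map_one _), one_mulVec]
  exact ⟨A, isUnit_det_of_left_inverse hBA, hA⟩

theorem LinearIndependent.row_eq_single_of_mulVec_apply_eq {v : ι → S}
    (hv : LinearIndependent R v) {A : Matrix ι ι R} {i : ι}
    (hA : (A.map (algebraMap R S) *ᵥ v) i = v i) : A i = Pi.single i 1 :=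
  hv.fintypeLinearCombination_injective <| by
    rw [← map_algebraMap_mulVec_apply, hA, Fintype.linearCombination_apply_single, one_smul]

end MatrixAction

section AffineMatrix

variable {n : ℕ} {R : Type*} [CommRing R]

/-- The matrix `[[U, t], [0, 1]]` of the affine map `z ↦ U z + t` in homogeneous coordinates. -/
def affineMatrix (U : Matrix (Fin n) (Fin n) R) (t : Fin n → R) :
    Matrix (Fin (n + 1)) (Fin (n + 1)) R :=
  Matrix.of (Fin.snoc (fun i => Fin.snoc (U i) (t i)) (Pi.single (Fin.last n) 1))

theorem det_of_row_last_eq_single {A : Matrix (Fin (n + 1)) (Fin (n + 1)) R}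
    (hA : A (Fin.last n) = Pi.single (Fin.last n) 1) :
    A.det = (A.submatrix Fin.castSucc Fin.castSucc).det := by
  rw [det_succ_row A (Fin.last n), Finset.sum_eq_single (Fin.last n)]
  · simp [hA, Fin.succAbove_last, ← two_mul]
  · intro j _ hj
    simp [hA, Pi.single_eq_of_ne hj]
  · simp

theorem det_affineMatrix (U : Matrix (Fin n) (Fin n) R) (t : Fin n → R) :
    (affineMatrix U t).det = U.det := by
  rw [det_of_row_last_eq_single (by ext; simp [affineMatrix])]
  congr 1
  ext i j
  simp [affineMatrix]

theorem eq_affineMatrix_of_row_last_eq_single {A : Matrix (Fin (n + 1)) (Fin (n + 1)) R}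
    (hA : A (Fin.last n) = Pi.single (Fin.last n) 1) :
    A = affineMatrix (A.submatrix Fin.castSucc Fin.castSucc)
      fun i => A i.castSucc (Fin.last n) := by
  ext i j
  induction i using Fin.lastCases with
  | last => simp [affineMatrix, hA]
  | cast i => induction j using Fin.lastCases <;> simp [affineMatrix]

theorem affineMatrix_map_mulVec_snoc {S : Type*} [CommRing S] (f : R →+* S)
    (U : Matrix (Fin n) (Fin n) R) (t : Fin n → R) (z : Fin n → S) :
    (affineMatrix U t).map f *ᵥ Fin.snoc z 1 = Fin.snoc (U.map f *ᵥ z + f ∘ t) 1 := by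
  ext i
  induction i using Fin.lastCases <;> simp [affineMatrix, mulVec, dotProduct, Fin.sum_univ_castSucc]

end AffineMatrix

theorem sameOrbit_iff_exists_mulVec_snoc {n : ℕ} {x y : Fin n → ℝ} :
    SameOrbit n x y ↔ ∃ A : Matrix (Fin (n + 1)) (Fin (n + 1)) ℤ, IsUnit A.det ∧
      A (Fin.last n) = Pi.single (Fin.last n) 1 ∧
      A.map (algebraMap ℤ ℝ) *ᵥ Fin.snoc x 1 = Fin.snoc y 1 := by
  constructor
  · rintro ⟨U, t, hdet, hy⟩
    refine ⟨affineMatrix U t, ?_, by ext j; simp [affineMatrix], ?_⟩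
    · rw [det_affineMatrix]
      rcases hdet with h | h <;> simp [h]
    · rw [affineMatrix_map_mulVec_snoc]
      congr 1
      ext i
      simp [hy i, mulVec, dotProduct]
  · rintro ⟨A, hA, hlast, hAx⟩
    rw [eq_affineMatrix_of_row_last_eq_single hlast, affineMatrix_map_mulVec_snoc] at hAx
    refine ⟨A.submatrix Fin.castSucc Fin.castSucc, fun i => A i.castSucc (Fin.last n),
      Int.isUnit_iff.mp (by rwa [← det_of_row_last_eq_single hlast]), fun i => ?_⟩
    have hyi := congrFun hAx i.castSucc
    simp only [Fin.snoc_castSucc] at hyi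
    simp [← hyi, mulVec, dotProduct]

theorem Gx_eq_span {n : ℕ} (y : Fin n → ℝ) :
    Gx y = (span ℤ (Set.range (Fin.snoc y 1 : Fin (n + 1) → ℝ))).toAddSubgroup := by
  rw [span_int_eq_addSubgroupClosure, Fin.range_snoc, Gx]

theorem orbit_eq_of_totally_irrational_general (n : ℕ) (x : Fin n → ℝ)
    (hx : LinearIndependent ℚ (Fin.snoc x (1 : ℝ) : Fin (n + 1) → ℝ)) :
    {y | SameOrbit n x y} = {y | Gx y = Gx x} := by
  have hxℤ := hx.restrict_scalars' ℤ
  ext y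
  rw [Set.mem_ofPred_eq, Set.mem_ofPred_eq, sameOrbit_iff_exists_mulVec_snoc, Gx_eq_span,
    Gx_eq_span, toAddSubgroup_injective.eq_iff]
  constructor
  · rintro ⟨A, hA, -, hAx⟩
    rw [← hAx, span_range_map_algebraMap_mulVec hA]
  · intro h
    obtain ⟨A, hA, hAx⟩ := hxℤ.exists_isUnit_det_of_span_eq h
    exact ⟨A, hA, hxℤ.row_eq_single_of_mulVec_apply_eq (by rw [hAx]; simp), hAx⟩

/-- If `x ∈ ℝⁿ` (`n ≥ 1`) is totally irrational, i.e. the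
`(n+1)`-tuple `(x₁,…,xₙ,1)` is rationally independent (equivalently
`rank G_x = n+1`), then `orb(x) = {y : G_y = G_x}`. -/
theorem orbit_eq_of_totally_irrational (n : ℕ) (hn : 1 ≤ n) (x : Fin n → ℝ)
    (hx : LinearIndependent ℚ (Fin.snoc x (1 : ℝ) : Fin (n + 1) → ℝ)) :
    {y | SameOrbit n x y} = {y | Gx y = Gx x} :=
  orbit_eq_of_totally_irrational_general n x hx
end

section
/- Let T = conv(v₁,…,v_{n+1}) and T' = conv(v'₁,…,v'_{n+1}) be regular n-simplexes in ℝⁿ with den(v_i) = den(v'_i) for all i = 1,…,n+1. Then there is a unique γ ∈ 𝒢_n such that γ(v_i) = v'_i for every i = 1,…,n+1. -/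
open Matrix

section BasisChange

variable {R ι : Type*} [CommRing R] [Fintype ι] [DecidableEq ι]

lemma Module.Basis.exists_isUnit_det_mulVec_eq (b b' : Module.Basis ι R (ι → R)) :
    ∃ M : Matrix ι ι R, IsUnit M.det ∧ ∀ k, M *ᵥ b k = b' k := by
  let L := b.equiv b' (Equiv.refl ι)
  refine ⟨LinearMap.toMatrix' (L : (ι → R) →ₗ[R] (ι → R)), ?_, fun k => ?_⟩
  · rw [LinearMap.det_toMatrix']
    exact L.isUnit_det'
  · rw [← Matrix.toLin'_apply, Matrix.toLin'_toMatrix']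
    simp [L]

lemma Module.Basis.matrix_eq_of_mulVec_eq {b : Module.Basis ι R (ι → R)} {M N : Matrix ι ι R}
    (h : ∀ k, M *ᵥ b k = N *ᵥ b k) : M = N :=
  Matrix.toLin'.injective (b.ext fun k => h k)

lemma Module.Basis.row_eq_single_of_mulVec_eq {b b' : Module.Basis ι R (ι → R)}
    {M : Matrix ι ι R} (hM : ∀ k, M *ᵥ b k = b' k) {i : ι} (hi : ∀ k, b k i = b' k i) :
    M i = Pi.single i 1 := by
  have hfun : (LinearMap.proj i).comp (Matrix.toLin' M) = LinearMap.proj (R := R) i :=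
    b.ext fun k => by simp [hM, hi]
  funext j
  simpa [Pi.single_apply, eq_comm] using LinearMap.congr_fun hfun (Pi.single j 1)

end BasisChange

section Homogenize

variable {n : ℕ}

/-- The matrix `[[U, t], [0, 1]]` of the affine map `x ↦ U x + t` in homogeneous coordinates. -/
def homogenize (U : Matrix (Fin n) (Fin n) ℤ) (t : Fin n → ℤ) :
    Matrix (Fin (n + 1)) (Fin (n + 1)) ℤ :=
  Matrix.of (Fin.snoc (fun i => Fin.snoc (U i) (t i)) (Pi.single (Fin.last n) 1))

@[simp] lemma homogenize_castSucc_castSucc (U : Matrix (Fin n) (Fin n) ℤ) (t : Fin n → ℤ)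
    (i j : Fin n) : homogenize U t i.castSucc j.castSucc = U i j := by
  simp [homogenize]

@[simp] lemma homogenize_castSucc_last (U : Matrix (Fin n) (Fin n) ℤ) (t : Fin n → ℤ)
    (i : Fin n) : homogenize U t i.castSucc (Fin.last n) = t i := by
  simp [homogenize]

@[simp] lemma homogenize_last (U : Matrix (Fin n) (Fin n) ℤ) (t : Fin n → ℤ) :
    homogenize U t (Fin.last n) = Pi.single (Fin.last n) 1 := by
  funext j
  simp [homogenize]

lemma homogenize_inj {U U' : Matrix (Fin n) (Fin n) ℤ} {t t' : Fin n → ℤ} :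
    homogenize U t = homogenize U' t' ↔ U = U' ∧ t = t' := by
  refine ⟨fun h => ⟨?_, ?_⟩, fun ⟨hU, ht⟩ => hU ▸ ht ▸ rfl⟩
  · ext i j; simpa using congrFun (congrFun h i.castSucc) j.castSucc
  · ext i; simpa using congrFun (congrFun h i.castSucc) (Fin.last n)

lemma exists_homogenize_eq {M : Matrix (Fin (n + 1)) (Fin (n + 1)) ℤ}
    (hM : M (Fin.last n) = Pi.single (Fin.last n) 1) :
    ∃ U t, homogenize U t = M := by
  refine ⟨M.submatrix Fin.castSucc Fin.castSucc, fun i => M i.castSucc (Fin.last n), ?_⟩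
  ext i j
  induction i using Fin.lastCases with
  | last => simp [hM]
  | cast i => induction j using Fin.lastCases <;> simp

lemma det_homogenize (U : Matrix (Fin n) (Fin n) ℤ) (t : Fin n → ℤ) :
    (homogenize U t).det = U.det := by
  have hminor : (homogenize U t).submatrix Fin.castSucc Fin.castSucc = U := by
    ext i j
    simp
  rw [det_succ_row _ (Fin.last n), Finset.sum_eq_single (Fin.last n)]
  · simp [Fin.succAbove_last, hminor, ← two_mul, pow_mul]
  · intro j _ hj
    simp [hj]
  · simp

lemma homogenize_map_mulVec_snoc (U : Matrix (Fin n) (Fin n) ℤ) (t : Fin n → ℤ)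
    (x : Fin n → ℝ) :
    (homogenize U t).map (Int.cast : ℤ → ℝ) *ᵥ Fin.snoc x 1 =
      Fin.snoc (fun i => ∑ j, (U i j : ℝ) * x j + t i) 1 := by
  ext i
  induction i using Fin.lastCases <;> simp [mulVec, dotProduct, Fin.sum_univ_castSucc]

end Homogenize

section HomogeneousCorrespondent

variable {n : ℕ} {x y : Fin n → ℝ} {z z' : Fin (n + 1) → ℤ}

lemma tildeR_eq_smul_snoc (x : Fin n → ℝ) : tildeR x = (den x : ℝ) • Fin.snoc x 1 := rfl

lemma den_ne_zero_of_intCast_comp_eq_tildeR (hz0 : z ≠ 0) (hz : Int.cast ∘ z = tildeR y) :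
    den y ≠ 0 := by
  intro hy
  refine hz0 ((Int.cast_injective (α := ℝ)).comp_left ?_)
  simp [hz, tildeR_eq_smul_snoc, hy, Function.comp_def, Pi.zero_def]

lemma last_eq_den_of_intCast_comp_eq_tildeR (hz : Int.cast ∘ z = tildeR y) :
    z (Fin.last n) = den y := by
  have h := congrFun hz (Fin.last n)
  simp only [Function.comp_apply, tildeR_eq_smul_snoc, Pi.smul_apply, Fin.snoc_last,
    smul_eq_mul, mul_one] at h
  exact_mod_cast h

lemma homogenize_mulVec_eq_iff {U : Matrix (Fin n) (Fin n) ℤ} {t : Fin n → ℤ}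
    (hz : Int.cast ∘ z = tildeR x) (hz' : Int.cast ∘ z' = tildeR y) (hden : den x = den y)
    (hx : den x ≠ 0) :
    homogenize U t *ᵥ z = z' ↔ ∀ i, y i = ∑ j, (U i j : ℝ) * x j + t i := by
  have hcast : homogenize U t *ᵥ z = z' ↔
      (homogenize U t).map (Int.cast : ℤ → ℝ) *ᵥ tildeR x = tildeR y := by
    have hmap : (homogenize U t).map (Int.cast : ℤ → ℝ) *ᵥ (Int.cast ∘ z) =
        Int.cast ∘ (homogenize U t *ᵥ z) :=
      funext fun i => ((Int.castRingHom ℝ).map_mulVec _ _ i).symm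
    rw [← hz, ← hz', hmap, Int.cast_injective.comp_left.eq_iff]
  rw [hcast, tildeR_eq_smul_snoc, tildeR_eq_smul_snoc, mulVec_smul, homogenize_map_mulVec_snoc,
    ← hden, smul_right_injective _ (Nat.cast_ne_zero.mpr hx) |>.eq_iff, Fin.snoc_inj]
  simp [funext_iff, eq_comm]

lemma IsRegularSimplex.exists_basis {v : Fin (n + 1) → Fin n → ℝ} (hv : IsRegularSimplex v) :
    ∃ B : Module.Basis (Fin (n + 1)) ℤ (Fin (n + 1) → ℤ),
      ∀ k, Int.cast ∘ B k = tildeR (v k) := by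
  obtain ⟨-, -, b, f, hb⟩ := hv
  let e := Equiv.ofBijective f (Finite.injective_iff_bijective.mp f.injective)
  exact ⟨b.reindex e.symm, fun k => funext fun i => by simpa [e] using hb k i⟩

end HomogeneousCorrespondent

/-- If `T = conv(v₀,…,vₙ)` and `T' = conv(v'₀,…,v'ₙ)` are regular
`n`-simplexes in `ℝⁿ` with `den(vᵢ) = den(v'ᵢ)` for all `i`, then there is a unique
`γ ∈ 𝒢ₙ` (i.e. a unique pair `(U, t)` with `det U = ±1`, `t ∈ ℤⁿ`) such that
`γ(vᵢ) = v'ᵢ` for every `i`. -/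
theorem exists_unique_affine_map_of_regular_simplexes (n : ℕ)
    (v v' : Fin (n + 1) → (Fin n → ℝ))
    (hv : IsRegularSimplex v) (hv' : IsRegularSimplex v')
    (hden : ∀ i, den (v i) = den (v' i)) :
    ∃! γ : Matrix (Fin n) (Fin n) ℤ × (Fin n → ℤ),
      (γ.1.det = 1 ∨ γ.1.det = -1) ∧
      ∀ k i, v' k i = (∑ j, (γ.1 i j : ℝ) * v k j) + (γ.2 i : ℝ) := by
  obtain ⟨B, hB⟩ := hv.exists_basis
  obtain ⟨B', hB'⟩ := hv'.exists_basis
  have hmaps : ∀ γ : Matrix (Fin n) (Fin n) ℤ × (Fin n → ℤ),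
      (∀ k, homogenize γ.1 γ.2 *ᵥ B k = B' k) ↔
        ∀ k i, v' k i = (∑ j, (γ.1 i j : ℝ) * v k j) + (γ.2 i : ℝ) := fun γ =>
    forall_congr' fun k => homogenize_mulVec_eq_iff (hB k) (hB' k) (hden k)
      (den_ne_zero_of_intCast_comp_eq_tildeR (B.ne_zero k) (hB k))
  obtain ⟨M, hMdet, hM⟩ := B.exists_isUnit_det_mulVec_eq B'
  obtain ⟨U, t, rfl⟩ := exists_homogenize_eq <| B.row_eq_single_of_mulVec_eq hM fun k => by
    rw [last_eq_den_of_intCast_comp_eq_tildeR (hB k),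
      last_eq_den_of_intCast_comp_eq_tildeR (hB' k), hden]
  refine ⟨(U, t), ⟨Int.isUnit_iff.mp (det_homogenize U t ▸ hMdet), (hmaps _).1 hM⟩, ?_⟩
  rintro ⟨U', t'⟩ ⟨-, h⟩
  exact Prod.ext_iff.mpr <| homogenize_inj.mp <| B.matrix_eq_of_mulVec_eq fun k =>
    ((hmaps (U', t')).2 h k).trans (hM k).symm
end

section
/- If x ∈ ℝ² and rank(G_x) = 1 (i.e., x is a rational point), then orb(x) = {x' ∈ ℝ² : G_{x'} = G_x}. Equivalently, two rational points of ℝ² lie in the same 𝒢₂-orbit if and only if they have the same denominator. -/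
/-! A rational point of `ℝ²` with denominator `d` is `(a, b) / d` with `gcd(a, b, d) = 1`.
A unimodular integer matrix takes `(a, b)` to `(g, 0)`, `g = gcd(a, b)`; translating by `(0, 1)`
gives `(g, d) / d`, and a second unimodular matrix takes `(g, d)` to `(1, 0)`. So every rational
point of denominator `d` lies in the orbit of `(1 / d, 0)`. Conversely, `den y` is the least
`d > 0` with `d • G_y ⊆ ℤ`, so it only depends on `G_y`, which is an orbit invariant. Finally, if
`G_x` has rank one then `x` is rational, since `1` and an irrational coordinate would be
`ℤ`-independent. -/

open Matrix

section Orbit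

variable {n : ℕ}

lemma intCast_comp_mulVec (U : Matrix (Fin n) (Fin n) ℤ) (v : Fin n → ℤ) :
    ((↑) ∘ (U *ᵥ v) : Fin n → ℝ) = U.map (↑) *ᵥ ((↑) ∘ v) :=
  funext fun i => RingHom.map_mulVec (Int.castRingHom ℝ) U v i

lemma map_intCast_mul (U V : Matrix (Fin n) (Fin n) ℤ) :
    ((U * V).map (↑) : Matrix (Fin n) (Fin n) ℝ) = U.map (↑) * V.map (↑) :=
  Matrix.map_mul (f := Int.castRingHom ℝ)

lemma sameOrbit_iff {x y : Fin n → ℝ} :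
    SameOrbit n x y ↔ ∃ (U : Matrix (Fin n) (Fin n) ℤ) (t : Fin n → ℤ),
      IsUnit U.det ∧ y = U.map (↑) *ᵥ x + (↑) ∘ t := by
  simp only [SameOrbit, Int.isUnit_iff, funext_iff, Pi.add_apply, mulVec, dotProduct, map_apply,
    Function.comp_apply]

lemma sameOrbit_mulVec_add {U : Matrix (Fin n) (Fin n) ℤ} (hU : IsUnit U.det) (t : Fin n → ℤ)
    (x : Fin n → ℝ) : SameOrbit n x (U.map (↑) *ᵥ x + (↑) ∘ t) :=
  sameOrbit_iff.2 ⟨U, t, hU, rfl⟩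

lemma SameOrbit.trans {x y z : Fin n → ℝ} (hxy : SameOrbit n x y) (hyz : SameOrbit n y z) :
    SameOrbit n x z := by
  obtain ⟨U, t, hU, rfl⟩ := sameOrbit_iff.1 hxy
  obtain ⟨V, s, hV, rfl⟩ := sameOrbit_iff.1 hyz
  refine sameOrbit_iff.2 ⟨V * U, V *ᵥ t + s, by rw [det_mul]; exact hV.mul hU, ?_⟩
  rw [mulVec_add, mulVec_mulVec, ← map_intCast_mul, ← intCast_comp_mulVec, add_assoc]
  congr 1
  ext i
  simp

lemma SameOrbit.symm {x y : Fin n → ℝ} (h : SameOrbit n x y) : SameOrbit n y x := by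
  obtain ⟨U, t, hU, rfl⟩ := sameOrbit_iff.1 h
  refine sameOrbit_iff.2 ⟨U⁻¹, -(U⁻¹ *ᵥ t), isUnit_nonsing_inv_det U hU, ?_⟩
  rw [mulVec_add, mulVec_mulVec, ← map_intCast_mul, nonsing_inv_mul U hU, ← intCast_comp_mulVec]
  ext i
  simp

lemma sameOrbit_add_intCast (x : Fin n → ℝ) (t : Fin n → ℤ) : SameOrbit n x (x + (↑) ∘ t) := by
  simpa using sameOrbit_mulVec_add (U := 1) (by simp) t x

lemma sameOrbit_smul_mulVec {U : Matrix (Fin n) (Fin n) ℤ} (hU : IsUnit U.det) (c : ℝ)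
    (v : Fin n → ℤ) : SameOrbit n (c • ((↑) ∘ v)) (c • ((↑) ∘ (U *ᵥ v))) := by
  rw [intCast_comp_mulVec, ← mulVec_smul]
  simpa using sameOrbit_mulVec_add hU 0 (c • ((↑) ∘ v))

end Orbit

section Gx

variable {n : ℕ}

lemma one_mem_Gx (x : Fin n → ℝ) : (1 : ℝ) ∈ Gx x :=
  AddSubgroup.subset_closure (Set.mem_insert _ _)

lemma apply_mem_Gx (x : Fin n → ℝ) (i : Fin n) : x i ∈ Gx x :=
  AddSubgroup.subset_closure (Set.mem_insert_of_mem _ ⟨i, rfl⟩)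

lemma Gx_le_iff {x : Fin n → ℝ} {H : AddSubgroup ℝ} : Gx x ≤ H ↔ 1 ∈ H ∧ ∀ i, x i ∈ H := by
  simp [Gx, AddSubgroup.closure_le, Set.insert_subset_iff, Set.range_subset_iff]

lemma SameOrbit.Gx_le {x y : Fin n → ℝ} (h : SameOrbit n x y) : Gx y ≤ Gx x := by
  obtain ⟨U, t, -, hy⟩ := h
  refine Gx_le_iff.2 ⟨one_mem_Gx x, fun i => ?_⟩
  rw [hy i]
  refine add_mem (sum_mem fun j _ => ?_) ?_
  · simpa using zsmul_mem (apply_mem_Gx x j) (U i j)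
  · simpa using zsmul_mem (one_mem_Gx x) (t i)

lemma SameOrbit.Gx_eq {x y : Fin n → ℝ} (h : SameOrbit n x y) : Gx y = Gx x :=
  le_antisymm h.Gx_le h.symm.Gx_le

lemma isRationalPoint_iff_Gx_le {x : Fin n → ℝ} :
    IsRationalPoint x ↔ Gx x ≤ (Rat.castHom ℝ).range.toAddSubgroup := by
  have h1 : (1 : ℝ) ∈ (Rat.castHom ℝ).range.toAddSubgroup := ⟨1, Rat.cast_one⟩
  rw [Gx_le_iff, and_iff_right h1]
  simp [IsRationalPoint, eq_comm]

lemma IsRationalPoint.of_Gx_le {x y : Fin n → ℝ} (hx : IsRationalPoint x) (h : Gx y ≤ Gx x) :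
    IsRationalPoint y :=
  isRationalPoint_iff_Gx_le.2 (h.trans (isRationalPoint_iff_Gx_le.1 hx))

lemma exists_ratCast_eq_of_finrank_eq_one {H : AddSubgroup ℝ} (hH : Module.finrank ℤ H = 1)
    (h1 : (1 : ℝ) ∈ H) {r : ℝ} (hr : r ∈ H) : ∃ q : ℚ, r = q := by
  by_contra hq
  have hirr : Irrational r := fun ⟨q, hq'⟩ => hq ⟨q, hq'.symm⟩
  have hli : LinearIndependent ℤ ![(⟨1, h1⟩ : H), ⟨r, hr⟩] := by
    refine LinearIndependent.pair_iff.2 fun s t hst => ?_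
    have hst : (s : ℝ) + t * r = 0 := by simpa using congrArg Subtype.val hst
    by_cases ht : t = 0
    · simp_all
    · exact absurd hst ((hirr.intCast_mul ht).intCast_add s).ne_zero
  have hrank : Module.rank ℤ H = 1 := Cardinal.toNat_eq_one.1 hH
  simpa [hrank] using hli.cardinal_le_rank

lemma isRationalPoint_of_finrank_Gx_eq_one {x : Fin n → ℝ}
    (hx : Module.finrank ℤ (Gx x) = 1) : IsRationalPoint x := fun i =>
  exists_ratCast_eq_of_finrank_eq_one hx (one_mem_Gx x) (apply_mem_Gx x i)

lemma forall_mul_apply_eq_intCast_iff_forall_mem_Gx (d : ℕ) (x : Fin n → ℝ) :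
    (∀ i, ∃ m : ℤ, (d : ℝ) * x i = m) ↔ ∀ r ∈ Gx x, ∃ m : ℤ, (d : ℝ) * r = m := by
  let H : AddSubgroup ℝ :=
    (Int.castRingHom ℝ).range.toAddSubgroup.comap (AddMonoidHom.mulLeft (d : ℝ))
  have hH : ∀ r, r ∈ H ↔ ∃ m : ℤ, (d : ℝ) * r = m := fun r => by simp [H, eq_comm]
  simp only [← hH]
  rw [← SetLike.le_def, Gx_le_iff, and_iff_right ((hH 1).2 ⟨d, by simp⟩)]

lemma den_eq_of_Gx_eq {m : ℕ} {x : Fin n → ℝ} {y : Fin m → ℝ} (h : Gx x = Gx y) :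
    den x = den y := by
  simp only [den, forall_mul_apply_eq_intCast_iff_forall_mem_Gx, h]

end Gx

section Den

variable {n : ℕ} {y : Fin n → ℝ}

lemma IsRationalPoint.exists_pos_mul_eq_intCast (hy : IsRationalPoint y) :
    ∃ d : ℕ, 0 < d ∧ ∀ i, ∃ m : ℤ, (d : ℝ) * y i = m := by
  choose q hq using hy
  refine ⟨∏ i, (q i).den, Finset.prod_pos fun i _ => (q i).pos, fun i => ?_⟩
  obtain ⟨k, hk⟩ := Finset.dvd_prod_of_mem (fun j => (q j).den) (Finset.mem_univ i)
  have hqi : ((q i).den : ℝ) * q i = (q i).num := by exact_mod_cast Rat.den_mul_eq_num (q i)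
  refine ⟨k * (q i).num, ?_⟩
  push_cast [hq i, hk]
  linear_combination (k : ℝ) * hqi

lemma IsRationalPoint.den_spec (hy : IsRationalPoint y) :
    0 < den y ∧ ∀ i, ∃ m : ℤ, (den y : ℝ) * y i = m :=
  Nat.sInf_mem hy.exists_pos_mul_eq_intCast

lemma den_le {d : ℕ} (hd : 0 < d) (h : ∀ i, ∃ m : ℤ, (d : ℝ) * y i = m) : den y ≤ d :=
  Nat.sInf_le ⟨hd, h⟩

lemma IsRationalPoint.eq_one_of_dvd_den_of_dvd_num (hy : IsRationalPoint y) {a : Fin n → ℤ}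
    (ha : ∀ i, (den y : ℝ) * y i = a i) {c : ℕ} (hcd : c ∣ den y) (hca : ∀ i, (c : ℤ) ∣ a i) :
    c = 1 := by
  obtain ⟨e, hce⟩ := hcd
  have hc : 0 < c := Nat.pos_of_mul_pos_right (hce ▸ hy.den_spec.1)
  have he : 0 < e := Nat.pos_of_mul_pos_left (hce ▸ hy.den_spec.1)
  have hle : den y ≤ e := by
    refine den_le he fun i => ?_
    obtain ⟨b, hb⟩ := hca i
    refine ⟨b, mul_left_cancel₀ (Nat.cast_ne_zero.2 hc.ne') ?_⟩
    have hi := ha i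
    rw [hce, hb] at hi
    push_cast at hi
    linear_combination hi
  nlinarith

end Den

lemma exists_det_eq_one_mulVec_eq_gcd (a b : ℤ) :
    ∃ U : Matrix (Fin 2) (Fin 2) ℤ, U.det = 1 ∧ U *ᵥ ![a, b] = ![(Int.gcd a b : ℤ), 0] := by
  by_cases hg : Int.gcd a b = 0
  · obtain ⟨rfl, rfl⟩ := Int.gcd_eq_zero_iff.1 hg
    exact ⟨1, det_one, by simp⟩
  obtain ⟨a', ha⟩ := Int.gcd_dvd_left a b
  obtain ⟨b', hb⟩ := Int.gcd_dvd_right a b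
  have hbezout : a * a.gcdA b + b * a.gcdB b = Int.gcd a b := (Int.gcd_eq_gcd_ab a b).symm
  refine ⟨!![a.gcdA b, a.gcdB b; -b', a'], ?_, ?_⟩
  · refine mul_left_cancel₀ (Int.natCast_ne_zero.2 hg) ?_
    rw [det_fin_two_of]
    linear_combination hbezout - a.gcdA b * ha - a.gcdB b * hb
  · have hrow : a' * b - b' * a = 0 := by linear_combination a' * hb - b' * ha
    ext i
    fin_cases i
    · simpa using hbezout
    · simpa [mul_comm, sub_eq_neg_add] using hrow

lemma sameOrbit_inv_smul_gcd (a b : ℤ) {d : ℕ} (hd : d ≠ 0) :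
    SameOrbit 2 ((d : ℝ)⁻¹ • ((↑) ∘ ![a, b]))
      ((d : ℝ)⁻¹ • ((↑) ∘ ![(Int.gcd (Int.gcd a b) d : ℤ), 0])) := by
  obtain ⟨U, hU, hUv⟩ := exists_det_eq_one_mulVec_eq_gcd a b
  obtain ⟨V, hV, hVv⟩ := exists_det_eq_one_mulVec_eq_gcd (Int.gcd a b) d
  have htranslate : (d : ℝ)⁻¹ • ((↑) ∘ ![(Int.gcd a b : ℤ), 0]) +
      ((↑) ∘ ![(0 : ℤ), 1] : Fin 2 → ℝ) = (d : ℝ)⁻¹ • ((↑) ∘ ![(Int.gcd a b : ℤ), (d : ℤ)]) := by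
    ext i
    fin_cases i <;> simp [hd]
  refine (sameOrbit_smul_mulVec (hU ▸ isUnit_one) _ _).trans ?_
  rw [hUv]
  refine (sameOrbit_add_intCast _ ![0, 1]).trans ?_
  rw [htranslate, ← hVv]
  exact sameOrbit_smul_mulVec (hV ▸ isUnit_one) _ _

lemma IsRationalPoint.sameOrbit_inv_den {y : Fin 2 → ℝ} (hy : IsRationalPoint y) :
    SameOrbit 2 y ![(den y : ℝ)⁻¹, 0] := by
  obtain ⟨hd, hint⟩ := hy.den_spec
  choose a ha using hint
  have hgcd : Int.gcd (Int.gcd (a 0) (a 1)) (den y) = 1 := by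
    refine hy.eq_one_of_dvd_den_of_dvd_num ha (Int.natCast_dvd_natCast.1 (Int.gcd_dvd_right _ _))
      fun i => (Int.gcd_dvd_left _ _).trans ?_
    fin_cases i
    exacts [Int.gcd_dvd_left _ _, Int.gcd_dvd_right _ _]
  have hy_eq : y = (den y : ℝ)⁻¹ • ((↑) ∘ ![a 0, a 1]) := by
    ext i
    fin_cases i <;> simp [← ha, hd.ne']
  have h := sameOrbit_inv_smul_gcd (a 0) (a 1) hd.ne'
  rw [hgcd, ← hy_eq] at h
  convert h using 1
  ext i
  fin_cases i <;> simp

lemma sameOrbit_iff_den_eq {y y' : Fin 2 → ℝ} (hy : IsRationalPoint y)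
    (hy' : IsRationalPoint y') : SameOrbit 2 y y' ↔ den y = den y' :=
  ⟨fun h => (den_eq_of_Gx_eq h.Gx_eq).symm,
    fun h => hy.sameOrbit_inv_den.trans (h ▸ hy'.sameOrbit_inv_den.symm)⟩

/-- If `x ∈ ℝ²` and `rank G_x = 1` (i.e. `x` is a rational point),
then `orb(x) = {x' : G_{x'} = G_x}`; equivalently, two rational points of `ℝ²` lie
in the same `𝒢₂`-orbit iff they have the same denominator. -/
theorem orbit_eq_of_rank_one (x : Fin 2 → ℝ) (hx : Module.finrank ℤ ↥(Gx x) = 1) :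
    ({y | SameOrbit 2 x y} = {x' | Gx x' = Gx x}) ∧
    (∀ y y' : Fin 2 → ℝ, IsRationalPoint y → IsRationalPoint y' →
      (SameOrbit 2 y y' ↔ den y = den y')) := by
  have hxr : IsRationalPoint x := isRationalPoint_of_finrank_Gx_eq_one hx
  refine ⟨Set.ext fun x' => ⟨SameOrbit.Gx_eq, fun h => ?_⟩, fun y y' => sameOrbit_iff_den_eq⟩
  exact (sameOrbit_iff_den_eq hxr (hxr.of_Gx_le h.le)).2 (den_eq_of_Gx_eq h.symm)
end

section
/- For n ≥ 1 and 0 ≤ e < n, let F be an e-dimensional rational affine space in ℝⁿ. Let conv(v₀,…,v_e) and conv(w₀,…,w_e) be two regular e-simplexes lying on F. If conv(v₀,…,v_e,v_{e+1},…,v_n) is a regular n-simplex for suitable points v_{e+1},…,v_n ∈ ℝⁿ, then conv(w₀,…,w_e,v_{e+1},…,v_n) is also a regular n-simplex. -/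
open Module Set Submodule

section IntegerLattice

def intCastPi (ι : Type*) : (ι → ℤ) →ₗ[ℤ] (ι → ℝ) :=
  (Int.castAddHom ℝ).toIntLinearMap.compLeft ι

variable {ι : Type*}

@[simp]
theorem intCastPi_apply (x : ι → ℤ) (i : ι) : intCastPi ι x i = x i := rfl

variable [Fintype ι] [DecidableEq ι]

theorem Module.Basis.span_range_intCastPi_comp_eq_top (b : Basis ι ℤ (ι → ℤ)) :
    span ℝ (range (intCastPi ι ∘ b)) = ⊤ := by
  have hcast : ∀ x, intCastPi ι x ∈ span ℝ (range (intCastPi ι ∘ b)) := by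
    intro x
    have hx : intCastPi ι x ∈ (span ℤ (range b)).map (intCastPi ι) := by
      rw [b.span_eq]; exact mem_map_of_mem mem_top
    rw [map_span, ← range_comp] at hx
    exact span_le_restrictScalars ℤ ℝ _ hx
  rw [eq_top_iff, ← (Pi.basisFun ℝ ι).span_eq, span_le]
  rintro _ ⟨i, rfl⟩
  have hi : intCastPi ι (Pi.single i 1) = Pi.basisFun ℝ ι i := by
    ext j
    simp [Pi.single_apply]
  exact hi ▸ hcast (Pi.single i 1)

noncomputable def Module.Basis.castToReal (b : Basis ι ℤ (ι → ℤ)) : Basis ι ℝ (ι → ℝ) :=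
  basisOfTopLeSpanOfCardEqFinrank _ b.span_range_intCastPi_comp_eq_top.ge (by simp)

@[simp]
theorem Module.Basis.coe_castToReal (b : Basis ι ℤ (ι → ℤ)) :
    ⇑b.castToReal = intCastPi ι ∘ b :=
  coe_basisOfTopLeSpanOfCardEqFinrank _ _ _

theorem Module.Basis.castToReal_repr (b : Basis ι ℤ (ι → ℤ)) (x : ι → ℤ) (i : ι) :
    b.castToReal.repr (intCastPi ι x) i = b.repr x i := by
  have hx : intCastPi ι x = ∑ j, (b.repr x j : ℝ) • b.castToReal j := by
    conv_lhs => rw [← b.sum_repr x]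
    rw [map_sum]
    refine Finset.sum_congr rfl fun j _ => ?_
    rw [map_zsmul, Int.cast_smul_eq_zsmul, coe_castToReal, Function.comp_apply]
  rw [hx, b.castToReal.repr_sum_self]

theorem Module.Basis.mem_span_of_intCastPi_mem_span {κ : Type*} (b : Basis ι ℤ (ι → ℤ))
    (f : κ → ι) {x : ι → ℤ}
    (hx : intCastPi ι x ∈ span ℝ (range fun k => intCastPi ι (b (f k)))) :
    x ∈ span ℤ (range fun k => b (f k)) := by
  change x ∈ span ℤ (range (b ∘ f))
  rw [range_comp, b.mem_span_image]
  rw [show (range fun k => intCastPi ι (b (f k))) = b.castToReal '' range f by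
    rw [← range_comp, b.coe_castToReal]; rfl] at hx
  intro i hi
  exact b.castToReal.repr_support_subset_of_mem_span _ hx (by simpa [b.castToReal_repr] using hi)

end IntegerLattice

section Homogenization

variable {n : ℕ}

def homog (n : ℕ) : (Fin n → ℝ) →ᵃ[ℝ] (Fin (n + 1) → ℝ) where
  toFun x := Fin.snoc x 1
  linear :=
    { toFun := fun x => Fin.snoc x 0
      map_add' := fun x y => by
        ext i
        refine Fin.lastCases ?_ (fun j => ?_) i <;> simp
      map_smul' := fun c x => by
        ext i
        refine Fin.lastCases ?_ (fun j => ?_) i <;> simp }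
  map_vadd' x y := by
    ext i
    refine Fin.lastCases ?_ (fun j => ?_) i <;> simp

theorem tildeR_eq_smul_homog (y : Fin n → ℝ) : tildeR y = (den y : ℝ) • homog n y := rfl

theorem homog_mem_span_of_mem {ι : Type*} [Fintype ι] {F : Set (Fin n → ℝ)}
    {p : ι → Fin n → ℝ} (hp : AffineIndependent ℝ p) (hpF : ∀ k, p k ∈ F)
    (hcard : Fintype.card ι = affDim F + 1) {q : Fin n → ℝ} (hq : q ∈ F) :
    homog n q ∈ span ℝ (range (homog n ∘ p)) := by
  have hspan : affineSpan ℝ (range p) = affineSpan ℝ F :=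
    hp.affineSpan_eq_of_le_of_card_eq_finrank_add_one
      (affineSpan_mono ℝ (range_subset_iff.2 hpF)) (by rwa [direction_affineSpan])
  have hq' : homog n q ∈ (affineSpan ℝ (range p)).map (homog n) :=
    AffineSubspace.mem_map_of_mem _ (hspan ▸ mem_affineSpan ℝ hq)
  rw [AffineSubspace.map_span, ← range_comp] at hq'
  exact affineSpan_subset_span hq'

theorem tildeR_mem_span_of_mem {ι : Type*} [Fintype ι] {F : Set (Fin n → ℝ)}
    {p : ι → Fin n → ℝ} (hp : AffineIndependent ℝ p) (hpF : ∀ k, p k ∈ F)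
    (hcard : Fintype.card ι = affDim F + 1) (hden : ∀ k, den (p k) ≠ 0)
    {q : Fin n → ℝ} (hq : q ∈ F) :
    tildeR q ∈ span ℝ (range (tildeR ∘ p)) := by
  have hle : span ℝ (range (homog n ∘ p)) ≤ span ℝ (range (tildeR ∘ p)) := by
    rw [span_le, range_subset_iff]
    intro k
    have hk : homog n (p k) = ((den (p k) : ℝ))⁻¹ • tildeR (p k) := by
      rw [tildeR_eq_smul_homog, inv_smul_smul₀ (by exact_mod_cast hden k)]
    rw [Function.comp_apply, hk]
    exact smul_mem _ _ (subset_span (mem_range_self k))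
  rw [tildeR_eq_smul_homog]
  exact smul_mem _ _ (hle (homog_mem_span_of_mem hp hpF hcard hq))

theorem affineIndependent_of_linearIndependent_tildeR {ι : Type*} {p : ι → Fin n → ℝ}
    (hp : LinearIndependent ℝ (tildeR ∘ p)) : AffineIndependent ℝ p := by
  have hden : ∀ k, (den (p k) : ℝ) ≠ 0 := fun k h0 =>
    hp.ne_zero k (by simp [tildeR_eq_smul_homog, h0])
  have hhomog : homog n ∘ p = (fun k => Units.mk0 _ (inv_ne_zero (hden k))) • (tildeR ∘ p) := by
    ext1 k
    simp [tildeR_eq_smul_homog, inv_smul_smul₀ (hden k)]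
  exact AffineIndependent.of_comp (homog n) (hhomog ▸ hp.units_smul _).affineIndependent

end Homogenization

section RegularSimplex

variable {n m : ℕ}

theorem IsRegularSimplex.den_ne_zero {v : Fin (m + 1) → Fin n → ℝ} (hv : IsRegularSimplex v)
    (k : Fin (m + 1)) : den (v k) ≠ 0 := by
  obtain ⟨-, -, b, f, hb⟩ := hv
  intro h0
  refine b.ne_zero (f k) (funext fun i => ?_)
  have hi := hb k i
  simp only [tildeR, h0, Nat.cast_zero, zero_mul] at hi
  exact_mod_cast hi

theorem isRegularSimplex_of_basis {u : Fin (m + 1) → Fin n → ℝ}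
    (hu : ∀ k, IsRationalPoint (u k)) (b : Basis (Fin (n + 1)) ℤ (Fin (n + 1) → ℤ))
    (f : Fin (m + 1) ↪ Fin (n + 1)) (hb : ∀ k, intCastPi _ (b (f k)) = tildeR (u k)) :
    IsRegularSimplex u := by
  refine ⟨?_, hu, b, f, fun k i => congrFun (hb k) i⟩
  apply affineIndependent_of_linearIndependent_tildeR
  have hli := b.castToReal.linearIndependent.comp f f.injective
  rwa [show b.castToReal ∘ f = tildeR ∘ u from funext fun k => by simpa using hb k] at hli

theorem mem_span_of_intCastPi_eq_tildeR {ι : Type*} [Fintype ι] {F : Set (Fin n → ℝ)}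
    {p : ι → Fin n → ℝ} (hp : AffineIndependent ℝ p) (hpF : ∀ k, p k ∈ F)
    (hcard : Fintype.card ι = affDim F + 1) (hden : ∀ k, den (p k) ≠ 0)
    (b : Basis (Fin (n + 1)) ℤ (Fin (n + 1) → ℤ)) (f : ι → Fin (n + 1))
    (hb : ∀ k, intCastPi _ (b (f k)) = tildeR (p k)) {q : Fin n → ℝ} (hq : q ∈ F)
    {x : Fin (n + 1) → ℤ} (hx : intCastPi _ x = tildeR q) :
    x ∈ span ℤ (range fun k => b (f k)) := by
  refine b.mem_span_of_intCastPi_mem_span f ?_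
  rw [hx, show (fun k => intCastPi _ (b (f k))) = tildeR ∘ p from funext hb]
  exact tildeR_mem_span_of_mem hp hpF hcard hden hq

end RegularSimplex

/-- Let `F` be an `e`-dimensional rational affine space in `ℝⁿ`
(`0 ≤ e < n`), and let `conv(v₀,…,v_e)`, `conv(w₀,…,w_e)` be regular `e`-simplexes
lying on `F`. If `conv(v₀,…,v_e,V_{e+1},…,V_n)` is a regular `n`-simplex, then so is
`conv(w₀,…,w_e,V_{e+1},…,V_n)`. -/
theorem regular_simplex_replace_face (n e : ℕ) (he : e < n)
    (F : Set (Fin n → ℝ)) (hFdim : affDim F = e)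
    (v w : Fin (e + 1) → (Fin n → ℝ))
    (hw : IsRegularSimplex w)
    (hvF : ∀ k, v k ∈ F) (hwF : ∀ k, w k ∈ F)
    (V : Fin (n + 1) → (Fin n → ℝ)) (hV : IsRegularSimplex V)
    (hVv : ∀ k : Fin (e + 1), V (Fin.castLE (by omega) k) = v k) :
    IsRegularSimplex (fun k : Fin (n + 1) =>
      if h : (k : ℕ) ≤ e then w ⟨(k : ℕ), by omega⟩ else V k) := by
  have hwden := hw.den_ne_zero
  obtain ⟨hwaff, hwrat, bw, fw, hbw⟩ := hw
  obtain ⟨-, hVrat, bV, fV, hbV⟩ := hV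
  let u : Fin (n + 1) → Fin (n + 1) → ℤ := fun k =>
    if h : (k : ℕ) ≤ e then bw (fw ⟨k, by omega⟩) else bV (fV k)
  have hspan : ⊤ ≤ span ℤ (range u) := by
    rw [← bV.span_eq, span_le, range_subset_iff]
    intro j
    obtain ⟨k, rfl⟩ := (Finite.injective_iff_surjective.1 fV.injective) j
    by_cases hk : (k : ℕ) ≤ e
    · have hface : span ℤ (range fun i => bw (fw i)) ≤ span ℤ (range u) :=
        span_mono (range_subset_iff.2 fun i => ⟨Fin.castLE (by omega) i, by simp [u, Fin.is_le]⟩)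
      refine hface (mem_span_of_intCastPi_eq_tildeR hwaff hwF (by simp [hFdim]) hwden bw fw
        (fun i => funext (hbw i)) (hvF ⟨k, by omega⟩) ?_)
      rw [← hVv ⟨k, by omega⟩]
      exact funext (hbV k)
    · exact subset_span ⟨k, by simp [u, hk]⟩
  refine isRegularSimplex_of_basis (fun k => ?_) (basisOfTopLeSpanOfCardEqFinrank u hspan (by simp))
    (Function.Embedding.refl _) (fun k => ?_)
  · split_ifs
    exacts [hwrat _, hVrat k]
  · simp only [coe_basisOfTopLeSpanOfCardEqFinrank, Function.Embedding.refl_apply, u]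
    split_ifs
    exacts [funext (hbw _), funext (hbV k)]
end

section
/- For n ≥ 1, let F be a nonempty rational affine space in ℝⁿ and let d = d_F be the least denominator of a rational point of F. Then for every rational point y ∈ F there is an integer h ≥ 1 such that den(y) = h·d; i.e., d divides the denominator of every rational point of F. -/
/-!
A rational affine space `F` is closed under affine combinations. If `x, y ∈ F` have
denominators `a = den x` and `b = den y`, write `g = gcd(a, b) = a s + b t` (Bézout); then
`z = (a s / g) x + (b t / g) y` lies in `F` and `g z = s (a x) + t (b y)` is integral, so
`den z ≤ g`. Taking `a = d_F` forces `g = d_F`, i.e. `d_F ∣ b`.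
-/

def IsIntegralPoint {n : ℕ} (v : Fin n → ℝ) : Prop :=
  ∀ i, ∃ m : ℤ, v i = m

namespace IsIntegralPoint

variable {n : ℕ} {u v : Fin n → ℝ}

theorem add (hu : IsIntegralPoint u) (hv : IsIntegralPoint v) : IsIntegralPoint (u + v) :=
  fun i => by
    obtain ⟨k, hk⟩ := hu i
    obtain ⟨m, hm⟩ := hv i
    exact ⟨k + m, by simp [hk, hm]⟩

theorem intCast_smul (hv : IsIntegralPoint v) (s : ℤ) : IsIntegralPoint ((s : ℝ) • v) :=
  fun i => by
    obtain ⟨m, hm⟩ := hv i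
    exact ⟨s * m, by simp [hm]⟩

end IsIntegralPoint

section Denominator

variable {n : ℕ} {y : Fin n → ℝ}

theorem IsRationalPoint.of_isIntegralPoint_smul {N : ℕ} (hN : N ≠ 0)
    (h : IsIntegralPoint ((N : ℝ) • y)) : IsRationalPoint y := fun i => by
  obtain ⟨m, hm⟩ := h i
  refine ⟨m / N, ?_⟩
  rw [Pi.smul_apply, smul_eq_mul] at hm
  push_cast
  field_simp
  linarith

theorem IsRationalPoint.exists_isIntegralPoint_smul (hy : IsRationalPoint y) :
    ∃ N : ℕ, 0 < N ∧ IsIntegralPoint ((N : ℝ) • y) := by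
  choose q hq using hy
  refine ⟨∏ i, (q i).den, Finset.prod_pos fun i _ => (q i).pos, fun i => ?_⟩
  obtain ⟨c, hc⟩ := Finset.dvd_prod_of_mem (fun i => (q i).den) (Finset.mem_univ i)
  refine ⟨(q i).num * c, ?_⟩
  have hnum : (q i : ℝ) * (q i).den = (q i).num := by exact_mod_cast Rat.mul_den_eq_num (q i)
  rw [Pi.smul_apply, smul_eq_mul, hq i, hc]
  push_cast
  linear_combination (c : ℝ) * hnum

theorem den_pos_and_isIntegralPoint (hy : IsRationalPoint y) :
    0 < den y ∧ IsIntegralPoint ((den y : ℝ) • y) :=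
  Nat.sInf_mem hy.exists_isIntegralPoint_smul

theorem den_le_of_isIntegralPoint_smul {N : ℕ} (hN : 0 < N)
    (h : IsIntegralPoint ((N : ℝ) • y)) : den y ≤ N :=
  Nat.sInf_le ⟨hN, h⟩

end Denominator

namespace IsRatAffineSpace

variable {n : ℕ} {F : Set (Fin n → ℝ)} {x y : Fin n → ℝ}

theorem smul_add_smul_mem (hF : IsRatAffineSpace F) (hx : x ∈ F) (hy : y ∈ F)
    {a b : ℝ} (hab : a + b = 1) : a • x + b • y ∈ F := by
  obtain ⟨S, hS, rfl⟩ := hF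
  intro H hH
  obtain ⟨h, k, -, rfl⟩ := hS H hH
  have hxH : ∑ i, (h i : ℝ) * x i = k := hx _ hH
  have hyH : ∑ i, (h i : ℝ) * y i = k := hy _ hH
  show ∑ i, (h i : ℝ) * (a * x i + b * y i) = k
  calc ∑ i, (h i : ℝ) * (a * x i + b * y i)
      = a * ∑ i, (h i : ℝ) * x i + b * ∑ i, (h i : ℝ) * y i := by
        simp only [Finset.mul_sum, ← Finset.sum_add_distrib]
        exact Finset.sum_congr rfl fun i _ => by ring
    _ = k := by rw [hxH, hyH, ← add_mul, hab, one_mul]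

theorem exists_mem_den_le_gcd (hF : IsRatAffineSpace F) (hx : x ∈ F) (hxr : IsRationalPoint x)
    (hy : y ∈ F) (hyr : IsRationalPoint y) :
    ∃ z ∈ F, IsRationalPoint z ∧ den z ≤ Nat.gcd (den x) (den y) := by
  obtain ⟨hx0, hxi⟩ := den_pos_and_isIntegralPoint hxr
  set a := den x
  set b := den y
  set g := Nat.gcd a b
  set s := Nat.gcdA a b
  set t := Nat.gcdB a b
  have hg : 0 < g := Nat.gcd_pos_of_pos_left b hx0
  have hbezout : (g : ℝ) = a * s + b * t := by exact_mod_cast Nat.gcd_eq_gcd_ab a b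
  set z := (a * s / g : ℝ) • x + (b * t / g : ℝ) • y
  have hzF : z ∈ F := hF.smul_add_smul_mem hx hy (by field_simp; exact hbezout.symm)
  have hgz : (g : ℝ) • z = (s : ℝ) • ((a : ℝ) • x) + (t : ℝ) • ((b : ℝ) • y) := by
    simp only [z, smul_add, smul_smul]
    congr 2 <;> field_simp
  have hgzi : IsIntegralPoint ((g : ℝ) • z) := hgz ▸
    (hxi.intCast_smul s).add ((den_pos_and_isIntegralPoint hyr).2.intCast_smul t)
  exact ⟨z, hzF, .of_isIntegralPoint_smul hg.ne' hgzi, den_le_of_isIntegralPoint_smul hg hgzi⟩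

end IsRatAffineSpace

section LeastDenominator

variable {n : ℕ} {F : Set (Fin n → ℝ)} {y : Fin n → ℝ}

theorem exists_mem_den_eq_dF (hy : y ∈ F) (hyr : IsRationalPoint y) :
    ∃ x ∈ F, IsRationalPoint x ∧ den x = dF F :=
  Nat.sInf_mem (s := {d | ∃ x ∈ F, IsRationalPoint x ∧ den x = d}) ⟨den y, y, hy, hyr, rfl⟩

theorem dF_le_den (hy : y ∈ F) (hyr : IsRationalPoint y) : dF F ≤ den y :=
  Nat.sInf_le ⟨y, hy, hyr, rfl⟩

theorem IsRatAffineSpace.dF_dvd_den (hF : IsRatAffineSpace F) (hy : y ∈ F)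
    (hyr : IsRationalPoint y) : dF F ∣ den y := by
  obtain ⟨x, hxF, hxr, hxd⟩ := exists_mem_den_eq_dF hy hyr
  obtain ⟨z, hzF, hzr, hz⟩ := hF.exists_mem_den_le_gcd hxF hxr hy hyr
  have hgcd_le : Nat.gcd (den x) (den y) ≤ den x :=
    Nat.le_of_dvd (den_pos_and_isIntegralPoint hxr).1 (Nat.gcd_dvd_left _ _)
  have hx_le_z : den x ≤ den z := hxd ▸ dF_le_den hzF hzr
  exact hxd ▸ Nat.gcd_eq_left_iff_dvd.mp (le_antisymm hgcd_le (hx_le_z.trans hz))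

end LeastDenominator

/-- For a nonempty rational affine space `F ⊆ ℝⁿ` with least
denominator `d = d_F`, the denominator of every rational point of `F` is a positive
multiple of `d`. -/
theorem dF_dvd_den (n : ℕ) (F : Set (Fin n → ℝ))
    (hF : IsRatAffineSpace F)
    (y : Fin n → ℝ) (hy : y ∈ F) (hyr : IsRationalPoint y) :
    ∃ h : ℕ, 1 ≤ h ∧ den y = h * dF F := by
  obtain ⟨h, hh⟩ := hF.dF_dvd_den hy hyr
  have hpos : 0 < den y := (den_pos_and_isIntegralPoint hyr).1
  refine ⟨h, Nat.pos_of_ne_zero ?_, by rw [hh, mul_comm]⟩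
  rintro rfl
  simp [hh] at hpos
end

section
/- Let a₁, a₂, a₃ be integers with gcd(a₁,a₂,a₃) = 1 and (a₁,a₂) ≠ (0,0), and let L = {(y₁,y₂) ∈ ℝ² : a₁y₁ + a₂y₂ + a₃ = 0}. Then d_L = gcd(a₁,a₂), i.e., the least denominator of a rational point lying on L equals gcd(a₁,a₂). -/
/-!
Clearing the denominators of a rational point of `L` by `d` gives an integer point
`(m₀, m₁)` with `a₁ m₀ + a₂ m₁ = -d a₃`, so `gcd(a₁, a₂)` divides `d a₃`, hence `d`.
Conversely, a Bézout relation `a₁ A + a₂ B = gcd(a₁, a₂)` yields the point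
`-a₃ (A, B) / gcd(a₁, a₂)` of `L`, whose denominator is therefore exactly `gcd(a₁, a₂)`.
-/

def ClearsDenominators {n : ℕ} (d : ℕ) (y : Fin n → ℝ) : Prop :=
  ∀ i, ∃ m : ℤ, (d : ℝ) * y i = m

section Denominator

variable {n : ℕ} {y : Fin n → ℝ}

theorem IsRationalPoint.exists_clearsDenominators (hy : IsRationalPoint y) :
    ∃ d, 0 < d ∧ ClearsDenominators d y := by
  choose q hq using hy
  refine ⟨∏ i, (q i).den, Finset.prod_pos fun i _ => (q i).pos, fun i => ?_⟩
  obtain ⟨k, hk⟩ := Finset.dvd_prod_of_mem (fun j => (q j).den) (Finset.mem_univ i)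
  have hnum : ((q i).den : ℝ) * q i = (q i).num := by exact_mod_cast Rat.den_mul_eq_num (q i)
  refine ⟨(q i).num * k, ?_⟩
  rw [hk, hq i]
  push_cast
  linear_combination (k : ℝ) * hnum

theorem den_le_of_clearsDenominators {d : ℕ} (hd : 0 < d) (h : ClearsDenominators d y) :
    den y ≤ d :=
  Nat.sInf_le ⟨hd, h⟩

theorem IsRationalPoint.den_pos_and_clearsDenominators (hy : IsRationalPoint y) :
    0 < den y ∧ ClearsDenominators (den y) y :=
  Nat.sInf_mem hy.exists_clearsDenominators

end Denominator

section Line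

variable {a₁ a₂ a₃ : ℤ}

theorem gcd_dvd_of_clearsDenominators (hcop : IsCoprime (Int.gcd a₁ a₂ : ℤ) a₃)
    {y : Fin 2 → ℝ} (hy : (a₁ : ℝ) * y 0 + (a₂ : ℝ) * y 1 + (a₃ : ℝ) = 0)
    {d : ℕ} (hd : ClearsDenominators d y) : Int.gcd a₁ a₂ ∣ d := by
  obtain ⟨m₀, hm₀⟩ := hd 0
  obtain ⟨m₁, hm₁⟩ := hd 1
  have hint : (d : ℤ) * a₃ = -(a₁ * m₀ + a₂ * m₁) := by
    have : (d : ℝ) * a₃ = -(a₁ * m₀ + a₂ * m₁) := by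
      rw [← hm₀, ← hm₁]
      linear_combination (d : ℝ) * hy
    exact_mod_cast this
  have hdvd : (Int.gcd a₁ a₂ : ℤ) ∣ d * a₃ := by
    rw [hint]
    exact dvd_neg.mpr <| dvd_add ((Int.gcd_dvd_left a₁ a₂).mul_right _)
      ((Int.gcd_dvd_right a₁ a₂).mul_right _)
  exact Int.natCast_dvd_natCast.mp (hcop.dvd_of_dvd_mul_right hdvd)

theorem gcd_le_den_of_mem_line (hcop : IsCoprime (Int.gcd a₁ a₂ : ℤ) a₃)
    {y : Fin 2 → ℝ} (hyL : (a₁ : ℝ) * y 0 + (a₂ : ℝ) * y 1 + (a₃ : ℝ) = 0)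
    (hy : IsRationalPoint y) : Int.gcd a₁ a₂ ≤ den y :=
  Nat.le_of_dvd hy.den_pos_and_clearsDenominators.1
    (gcd_dvd_of_clearsDenominators hcop hyL hy.den_pos_and_clearsDenominators.2)

variable (a₁ a₂ a₃) in
noncomputable def bezoutPoint : Fin 2 → ℝ :=
  ![(-(a₃ * Int.gcdA a₁ a₂) : ℤ) / (Int.gcd a₁ a₂ : ℝ),
    (-(a₃ * Int.gcdB a₁ a₂) : ℤ) / (Int.gcd a₁ a₂ : ℝ)]

theorem bezoutPoint_mem_line (hg : Int.gcd a₁ a₂ ≠ 0) :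
    (a₁ : ℝ) * bezoutPoint a₁ a₂ a₃ 0 + (a₂ : ℝ) * bezoutPoint a₁ a₂ a₃ 1 + (a₃ : ℝ) = 0 := by
  have hbez : (Int.gcd a₁ a₂ : ℝ) = a₁ * Int.gcdA a₁ a₂ + a₂ * Int.gcdB a₁ a₂ := by
    exact_mod_cast Int.gcd_eq_gcd_ab a₁ a₂
  simp only [bezoutPoint, Matrix.cons_val_zero, Matrix.cons_val_one]
  field_simp
  push_cast
  linear_combination (a₃ : ℝ) * hbez

theorem isRationalPoint_bezoutPoint : IsRationalPoint (bezoutPoint a₁ a₂ a₃) := by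
  intro i
  fin_cases i
  · exact ⟨(-(a₃ * Int.gcdA a₁ a₂) : ℤ) / (Int.gcd a₁ a₂ : ℚ), by simp [bezoutPoint]⟩
  · exact ⟨(-(a₃ * Int.gcdB a₁ a₂) : ℤ) / (Int.gcd a₁ a₂ : ℚ), by simp [bezoutPoint]⟩

theorem clearsDenominators_gcd_bezoutPoint (hg : Int.gcd a₁ a₂ ≠ 0) :
    ClearsDenominators (Int.gcd a₁ a₂) (bezoutPoint a₁ a₂ a₃) := by
  intro i
  fin_cases i
  · exact ⟨-(a₃ * Int.gcdA a₁ a₂), by simp [bezoutPoint, field]⟩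
  · exact ⟨-(a₃ * Int.gcdB a₁ a₂), by simp [bezoutPoint, field]⟩

end Line

/-- For integers `a₁, a₂, a₃` with `gcd(a₁,a₂,a₃) = 1` and
`(a₁,a₂) ≠ (0,0)`, the least denominator of a rational point on the line
`L = {(y₁,y₂) : a₁y₁ + a₂y₂ + a₃ = 0}` equals `gcd(a₁,a₂)`. -/
theorem dF_line_eq_gcd (a₁ a₂ a₃ : ℤ) (hgcd : Nat.gcd (Int.gcd a₁ a₂) a₃.natAbs = 1)
    (hne : ¬(a₁ = 0 ∧ a₂ = 0)) :
    dF {y : Fin 2 → ℝ | (a₁ : ℝ) * y 0 + (a₂ : ℝ) * y 1 + (a₃ : ℝ) = 0}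
      = Int.gcd a₁ a₂ := by
  have hg : Int.gcd a₁ a₂ ≠ 0 := fun h => hne (Int.gcd_eq_zero_iff.mp h)
  have hcop : IsCoprime (Int.gcd a₁ a₂ : ℤ) a₃ := Int.isCoprime_iff_gcd_eq_one.mpr hgcd
  refine IsLeast.csInf_eq ⟨⟨bezoutPoint a₁ a₂ a₃, bezoutPoint_mem_line hg,
    isRationalPoint_bezoutPoint, ?_⟩, ?_⟩
  · exact le_antisymm
      (den_le_of_clearsDenominators (Nat.pos_of_ne_zero hg) (clearsDenominators_gcd_bezoutPoint hg))
      (gcd_le_den_of_mem_line hcop (bezoutPoint_mem_line hg) isRationalPoint_bezoutPoint)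
  · rintro _ ⟨y, hyL, hy, rfl⟩
    exact gcd_le_den_of_mem_line hcop hyL hy
end
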